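/- Let R be a finite local ring with maximal ideal of order m such that R is not isomorphic to F_3 and R/M is not isomorphic to F_2 (equivalently |R|/m ≥ 3 and |R^×| ≥ 3). Then the energy of the line graph of the unitary Cayley graph G_R equals 2|R|(|R^×| − 2). -/

import Mathlib

open Polynomial

open Polynomial

/-- The unitary Cayley graph of a finite commutative ring `R`. -/
def unitaryCayley (R : Type*) [CommRing R] [Fintype R] [DecidableEq R] : SimpleGraph R where
  Adj x y := x ≠ y ∧ IsUnit (x - y)
  symm := by
    constructor
    intro x y h
    exact ⟨h.1.symm, by simpa using h.2.neg⟩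
  loopless := ⟨fun x h => h.1 rfl⟩

instance unitaryCayley.instDecidableRel (R : Type*) [CommRing R] [Fintype R] [DecidableEq R] :
    DecidableRel (unitaryCayley R).Adj := fun a b =>
  decidable_of_iff (a ≠ b ∧ ∃ c, (a - b) * c = 1)
    (and_congr Iff.rfl isUnit_iff_exists_inv.symm)

/-- An `r`-regular graph is Ramanujan if every adjacency eigenvalue other than `±r`
has absolute value at most `2 * sqrt (r - 1)`. -/
def IsRamanujan {V : Type*} [Fintype V] [DecidableEq V] (G : SimpleGraph V)
    [DecidableRel G.Adj] (r : ℕ) : Prop :=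
  ∀ μ ∈ (SimpleGraph.adjMatrix ℝ G).charpoly.roots,
    |μ| ≠ (r : ℝ) → |μ| ≤ 2 * Real.sqrt ((r : ℝ) - 1)

/-- The energy of a graph: the sum of absolute values of its adjacency eigenvalues. -/
noncomputable def graphEnergy {V : Type*} [Fintype V] [DecidableEq V] (G : SimpleGraph V)
    [DecidableRel G.Adj] : ℝ :=
  ((SimpleGraph.adjMatrix ℝ G).charpoly.roots.map (fun μ => |μ|)).sum

noncomputable instance lineGraph.instDecidableRel {V : Type*} (G : SimpleGraph V) :
    DecidableRel G.lineGraph.Adj := Classical.decRel _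


/-!
Let `N` be the vertex-edge incidence matrix of an `r`-regular graph `G` on `n` vertices with
`|E| ≥ n` edges. Then `N Nᵀ = A(G) + r` and `Nᵀ N = A(L(G)) + 2`, and since `Nᵀ N` and `N Nᵀ`
have the same nonzero spectrum, the spectrum of `L(G)` is `λᵢ + r - 2` together with `-2` of
multiplicity `|E| - n`. When every `λᵢ ≥ 2 - r`, the energy is therefore
`trace A(G) + n (r - 2) + 2 (|E| - n) = 2n(r - 2)`.

For a local ring, `x - y` is a unit iff `x - y ∉ M`, so `A(G_R) = J - B` with `B` the indicator
matrix of lying in the same coset of `M`. From `B² = mB` and `JB = BJ = mJ` one gets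
`A (A + m) (A - r) = 0`, so every eigenvalue of `G_R` lies in `{0, -m, r}`, and the hypotheses
give `r - m ≥ 2`, i.e. `-m ≥ 2 - r`.
-/

open Finset Matrix

namespace Matrix

variable {K : Type*} {m n : Type*} [Fintype m] [Fintype n]

theorem of_one_mul_of_one [NonAssocSemiring K] :
    (of 1 : Matrix n n K) * of 1 = (Fintype.card n : K) • of 1 := by
  ext; simp [mul_apply]

variable [DecidableEq m] [DecidableEq n]

section Domain

variable [CommRing K] [IsDomain K]

theorem roots_charpoly_sub_scalar (A : Matrix n n K) (c : K) :
    (A - scalar n c).charpoly.roots = A.charpoly.roots.map (· - c) := by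
  rw [charpoly_sub_scalar, ← one_mul X, ← C_1, roots_comp_C_mul_X_add_C _ _ _ isUnit_one]
  simp

theorem roots_charpoly_add_scalar (A : Matrix n n K) (c : K) :
    (A + scalar n c).charpoly.roots = A.charpoly.roots.map (· + c) := by
  simpa [sub_eq_add_neg] using roots_charpoly_sub_scalar A (-c)

theorem roots_charpoly_mul_comm_of_le (A : Matrix m n K) (B : Matrix n m K)
    (h : Fintype.card n ≤ Fintype.card m) :
    (A * B).charpoly.roots =
      (Fintype.card m - Fintype.card n) • {0} + (B * A).charpoly.roots := by
  rw [charpoly_mul_comm_of_le A B h,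
    roots_mul (mul_ne_zero (pow_ne_zero _ X_ne_zero) (charpoly_monic _).ne_zero), roots_X_pow]

end Domain

theorem isRoot_of_aeval_eq_zero_of_isRoot_charpoly [Field K] {A : Matrix n n K} {p : K[X]}
    (hp : aeval A p = 0) {μ : K} (hμ : A.charpoly.IsRoot μ) : p.IsRoot μ := by
  have := spectrum.subset_polynomial_aeval A p ⟨μ, mem_spectrum_iff_isRoot_charpoly.2 hμ, rfl⟩
  rw [hp, spectrum.mem_iff, sub_zero] at this
  by_contra h
  exact this ((Ne.isUnit h).map _)

end Matrix

theorem Sym2.card_filter_mem_and_mem_le_one {V : Type*} [Fintype V] [DecidableEq V]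
    {e f : Sym2 V} (hef : e ≠ f) : #{a | a ∈ e ∧ a ∈ f} ≤ 1 := by
  refine card_le_one.2 fun a ha b hb => ?_
  by_contra hab
  simp only [mem_filter, mem_univ, true_and] at ha hb
  exact hef (((Sym2.mem_and_mem_iff hab).1 ⟨ha.1, hb.1⟩).trans
    ((Sym2.mem_and_mem_iff hab).1 ⟨ha.2, hb.2⟩).symm)

namespace SimpleGraph

section Regular

variable {V : Type*} [Fintype V] {G : SimpleGraph V} [DecidableRel G.Adj] {r : ℕ}

theorem IsRegularOfDegree.two_mul_card_edgeSet (hG : G.IsRegularOfDegree r) :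
    2 * Fintype.card G.edgeSet = Fintype.card V * r := by
  have h := G.sum_degrees_eq_twice_card_edges
  simp only [hG.degree_eq, sum_const, card_univ, smul_eq_mul, edgeFinset_card] at h
  exact h.symm

theorem IsRegularOfDegree.card_le_card_edgeSet (hG : G.IsRegularOfDegree r) (hr : 2 ≤ r) :
    Fintype.card V ≤ Fintype.card G.edgeSet := by
  nlinarith [hG.two_mul_card_edgeSet]

end Regular

section Incidence

variable {V : Type*} [DecidableEq V] (G : SimpleGraph V) [DecidableRel G.Adj]
  (R : Type*) [Semiring R]

noncomputable def edgeIncMatrix : Matrix V G.edgeSet R :=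
  (G.incMatrix R).submatrix id (↑)

theorem edgeIncMatrix_apply (a : V) (e : G.edgeSet) :
    G.edgeIncMatrix R a e = if a ∈ (e : Sym2 V) then 1 else 0 := by
  simp [edgeIncMatrix, incMatrix_apply', incidenceSet, e.2]

variable [Fintype V]

theorem edgeIncMatrix_mul_transpose :
    G.edgeIncMatrix R * (G.edgeIncMatrix R)ᵀ = G.incMatrix R * (G.incMatrix R)ᵀ := by
  ext a b
  simp only [edgeIncMatrix, mul_apply, submatrix_apply, transpose_apply, id]
  have hzero (e : {e // e ∉ G.edgeSet}) : G.incMatrix R a e * G.incMatrix R b e = 0 := by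
    rw [G.incMatrix_of_notMem_incidenceSet fun h => e.2 h.1, zero_mul]
  rw [← Fintype.sum_subtype_add_sum_subtype (· ∈ G.edgeSet), Fintype.sum_eq_zero _ hzero,
    add_zero]

theorem edgeIncMatrix_mul_transpose_of_isRegularOfDegree {r : ℕ} (hG : G.IsRegularOfDegree r) :
    G.edgeIncMatrix R * (G.edgeIncMatrix R)ᵀ = G.adjMatrix R + scalar V (r : R) := by
  ext a b
  rw [edgeIncMatrix_mul_transpose, incMatrix_mul_transpose]
  simp only [of_apply, Matrix.add_apply, scalar_apply, diagonal_apply, adjMatrix_apply,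
    hG.degree_eq]
  by_cases hab : a = b <;> simp [hab]

theorem edgeIncMatrix_transpose_mul [DecidableRel G.lineGraph.Adj] :
    (G.edgeIncMatrix R)ᵀ * G.edgeIncMatrix R = G.lineGraph.adjMatrix R + scalar _ 2 := by
  ext e f
  have hsum : ((G.edgeIncMatrix R)ᵀ * G.edgeIncMatrix R) e f =
      #{a | a ∈ (e : Sym2 V) ∧ a ∈ (f : Sym2 V)} := by
    simp only [mul_apply, transpose_apply, edgeIncMatrix_apply, ite_zero_mul_ite_zero, mul_one]
    rw [sum_boole]
  rw [hsum, Matrix.add_apply, adjMatrix_apply, scalar_apply, diagonal_apply]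
  by_cases hef : e = f
  · subst hef
    have hfilter : ({a | a ∈ (e : Sym2 V) ∧ a ∈ (e : Sym2 V)} : Finset V) =
        (e : Sym2 V).toFinset := by
      ext; simp [Sym2.mem_toFinset]
    rw [hfilter, Sym2.card_toFinset_of_not_isDiag _ (G.not_isDiag_of_mem_edgeSet e.2)]
    simp
  · by_cases hadj : G.lineGraph.Adj e f
    · obtain ⟨-, v, hv⟩ := lineGraph_adj_iff_exists.1 hadj
      have hcard : #{a | a ∈ (e : Sym2 V) ∧ a ∈ (f : Sym2 V)} = 1 :=
        le_antisymm (Sym2.card_filter_mem_and_mem_le_one (Subtype.coe_injective.ne hef))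
          (card_pos.2 ⟨v, by simpa using hv⟩)
      simp [hcard, hadj, hef]
    · have hcard : #{a | a ∈ (e : Sym2 V) ∧ a ∈ (f : Sym2 V)} = 0 :=
        card_eq_zero.2 (filter_eq_empty_iff.2 fun a _ ha => hadj ⟨hef, a, ha⟩)
      simp [hcard, hadj, hef]

end Incidence

section LineGraph

variable {V : Type*} [Fintype V] [DecidableEq V] {G : SimpleGraph V} [DecidableRel G.Adj]
  [DecidableRel G.lineGraph.Adj] {r : ℕ}

theorem roots_charpoly_adjMatrix_lineGraph {K : Type*} [CommRing K] [IsDomain K]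
    (hG : G.IsRegularOfDegree r) (hr : 2 ≤ r) :
    (G.lineGraph.adjMatrix K).charpoly.roots =
      (Fintype.card G.edgeSet - Fintype.card V) • {-2} +
        (G.adjMatrix K).charpoly.roots.map (· + ((r : K) - 2)) := by
  have hL : G.lineGraph.adjMatrix K =
      (G.edgeIncMatrix K)ᵀ * G.edgeIncMatrix K - scalar _ 2 :=
    eq_sub_of_add_eq (G.edgeIncMatrix_transpose_mul K).symm
  rw [hL, roots_charpoly_sub_scalar,
    roots_charpoly_mul_comm_of_le _ _ (hG.card_le_card_edgeSet hr),
    edgeIncMatrix_mul_transpose_of_isRegularOfDegree _ _ hG, roots_charpoly_add_scalar,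
    Multiset.map_add, Multiset.map_nsmul, Multiset.map_singleton, Multiset.map_map]
  congr 2
  · simp
  · funext μ
    simp only [Function.comp_apply]
    ring

theorem graphEnergy_lineGraph_of_isRegularOfDegree (hG : G.IsRegularOfDegree r) (hr : 2 ≤ r)
    (hspec : ∀ μ ∈ (G.adjMatrix ℝ).charpoly.roots, 2 - (r : ℝ) ≤ μ) :
    graphEnergy G.lineGraph = 2 * Fintype.card V * ((r : ℝ) - 2) := by
  have hsplit := (G.isHermitian_adjMatrix ℝ).splits_charpoly
  have hcard : (G.adjMatrix ℝ).charpoly.roots.card = Fintype.card V := by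
    rw [splits_iff_card_roots.1 hsplit, charpoly_natDegree_eq_dim]
  have hsum : (G.adjMatrix ℝ).charpoly.roots.sum = 0 := by
    rw [← trace_eq_sum_roots_charpoly_of_splits hsplit, trace_adjMatrix]
  have habs : ((G.adjMatrix ℝ).charpoly.roots.map fun μ => |μ + ((r : ℝ) - 2)|) =
      (G.adjMatrix ℝ).charpoly.roots.map fun μ => μ + ((r : ℝ) - 2) :=
    Multiset.map_congr rfl fun μ hμ => abs_of_nonneg (by linarith [hspec μ hμ])
  have hedges : (2 * Fintype.card G.edgeSet : ℝ) = Fintype.card V * r := by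
    exact_mod_cast hG.two_mul_card_edgeSet
  rw [graphEnergy, roots_charpoly_adjMatrix_lineGraph hG hr, Multiset.map_add, Multiset.sum_add,
    Multiset.map_nsmul, Multiset.sum_nsmul, Multiset.map_map]
  simp only [Function.comp_def, habs, Multiset.sum_map_add, Multiset.map_id', hsum,
    Multiset.map_const', Multiset.sum_replicate, hcard, Multiset.map_singleton,
    Multiset.sum_singleton, nsmul_eq_mul, abs_neg, abs_two, zero_add]
  rw [Nat.cast_sub (hG.card_le_card_edgeSet hr)]
  linear_combination hedges

end LineGraph

end SimpleGraph

namespace AddSubgroup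

variable {A : Type*} [AddCommGroup A] [Fintype A] (H : AddSubgroup A) [DecidablePred (· ∈ H)]
  (K : Type*) [Semiring K]

def cosetMatrix : Matrix A A K :=
  of fun x y => if x - y ∈ H then 1 else 0

theorem card_filter_sub_mem (x : A) : #{z | x - z ∈ H} = Nat.card H := by
  rw [← Fintype.card_subtype, Nat.card_eq_fintype_card]
  exact Fintype.card_congr ((Equiv.subLeft x).subtypeEquiv fun _ => Iff.rfl)

theorem card_filter_sub_mem' (y : A) : #{z | z - y ∈ H} = Nat.card H := by
  simp_rw [← H.sub_mem_comm_iff (a := y)]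
  exact H.card_filter_sub_mem y

theorem cosetMatrix_mul_self :
    H.cosetMatrix K * H.cosetMatrix K = (Nat.card H : K) • H.cosetMatrix K := by
  ext x y
  simp only [cosetMatrix, mul_apply, of_apply, ite_zero_mul_ite_zero, mul_one,
    Matrix.smul_apply, smul_eq_mul, sum_boole]
  split_ifs with hxy
  · rw [mul_one, ← H.card_filter_sub_mem x]
    refine congrArg _ (congrArg _ (filter_congr fun z _ => and_iff_left_of_imp fun hxz => ?_))
    simpa using H.sub_mem hxy hxz
  · rw [mul_zero, filter_eq_empty_iff.2 fun z _ h => hxy (by simpa using H.add_mem h.1 h.2),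
      card_empty, Nat.cast_zero]

theorem of_one_mul_cosetMatrix :
    (of 1 : Matrix A A K) * H.cosetMatrix K = (Nat.card H : K) • of 1 := by
  ext x y
  simp [cosetMatrix, mul_apply, sum_boole, H.card_filter_sub_mem' y]

theorem cosetMatrix_mul_of_one :
    H.cosetMatrix K * (of 1 : Matrix A A K) = (Nat.card H : K) • of 1 := by
  ext x y
  simp [cosetMatrix, mul_apply, sum_boole, H.card_filter_sub_mem x]

end AddSubgroup

theorem Nat.card_subtype_isUnit (R : Type*) [Monoid R] :
    Nat.card {x : R // IsUnit x} = Nat.card Rˣ :=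
  Nat.card_range_of_injective (Units.val_injective (α := R))

theorem IsLocalRing.card_eq_card_units_add_card_maximalIdeal (R : Type*) [CommRing R]
    [IsLocalRing R] [Finite R] :
    Nat.card R = Nat.card Rˣ + Nat.card (maximalIdeal R) := by
  classical
  rw [← Nat.card_subtype_isUnit, Nat.card_congr (Equiv.sumCompl IsUnit).symm, Nat.card_sum]
  rfl

section UnitaryCayley

open IsLocalRing SimpleGraph

variable {R : Type*} [CommRing R] [Fintype R] [DecidableEq R]

theorem unitaryCayley_adj_iff [Nontrivial R] {x y : R} :
    (unitaryCayley R).Adj x y ↔ IsUnit (x - y) :=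
  ⟨And.right, fun h => ⟨fun hxy => not_isUnit_zero (by rwa [hxy, sub_self] at h), h⟩⟩

theorem unitaryCayley_isRegularOfDegree [Nontrivial R] :
    (unitaryCayley R).IsRegularOfDegree (Nat.card Rˣ) := fun x => by
  rw [← card_neighborSet_eq_degree, ← Nat.card_eq_fintype_card, ← Nat.card_subtype_isUnit]
  exact Nat.card_congr ((Equiv.subLeft x).subtypeEquiv fun _ => unitaryCayley_adj_iff)

variable [IsLocalRing R] (K : Type*) [CommRing K]

open Classical in
theorem unitaryCayley_adjMatrix_eq :
    (unitaryCayley R).adjMatrix K = of 1 - (maximalIdeal R).toAddSubgroup.cosetMatrix K := by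
  ext x y
  by_cases h : IsUnit (x - y) <;>
    simp [adjMatrix_apply, unitaryCayley_adj_iff, AddSubgroup.cosetMatrix, h, mem_maximalIdeal]

theorem unitaryCayley_adjMatrix_mul_adjMatrix_add_smul_one :
    (unitaryCayley R).adjMatrix K *
        ((unitaryCayley R).adjMatrix K + (Nat.card (maximalIdeal R) : K) • 1) =
      (Nat.card Rˣ : K) • of 1 := by
  classical
  have hB := (maximalIdeal R).toAddSubgroup.cosetMatrix_mul_self K
  rw [unitaryCayley_adjMatrix_eq]
  simp only [sub_mul, mul_sub, mul_add, Matrix.mul_smul, mul_one, of_one_mul_of_one, hB,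
    AddSubgroup.of_one_mul_cosetMatrix, AddSubgroup.cosetMatrix_mul_of_one,
    Fintype.card_eq_nat_card, card_eq_card_units_add_card_maximalIdeal]
  push_cast
  module

theorem of_one_mul_unitaryCayley_adjMatrix :
    (of 1 : Matrix R R K) * (unitaryCayley R).adjMatrix K = (Nat.card Rˣ : K) • of 1 := by
  classical
  rw [unitaryCayley_adjMatrix_eq, mul_sub, of_one_mul_of_one, AddSubgroup.of_one_mul_cosetMatrix,
    Fintype.card_eq_nat_card, card_eq_card_units_add_card_maximalIdeal]
  push_cast
  module

theorem aeval_unitaryCayley_adjMatrix :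
    aeval ((unitaryCayley R).adjMatrix K)
      (X * (X + C (Nat.card (maximalIdeal R) : K)) * (X - C (Nat.card Rˣ : K))) = 0 := by
  rw [map_mul, map_mul, map_add, map_sub, aeval_X, aeval_C, aeval_C,
    Algebra.algebraMap_eq_smul_one, Algebra.algebraMap_eq_smul_one,
    unitaryCayley_adjMatrix_mul_adjMatrix_add_smul_one, smul_mul, mul_sub,
    of_one_mul_unitaryCayley_adjMatrix, Matrix.mul_smul, mul_one, sub_self, smul_zero]

theorem eq_zero_or_eq_neg_or_eq_of_mem_roots_unitaryCayley {K : Type*} [Field K] {μ : K}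
    (hμ : μ ∈ ((unitaryCayley R).adjMatrix K).charpoly.roots) :
    μ = 0 ∨ μ = -(Nat.card (maximalIdeal R) : K) ∨ μ = Nat.card Rˣ := by
  have := isRoot_of_aeval_eq_zero_of_isRoot_charpoly (aeval_unitaryCayley_adjMatrix K)
    (isRoot_of_mem_roots hμ)
  simpa [sub_eq_zero, add_eq_zero_iff_eq_neg, or_assoc] using this

end UnitaryCayley

/-- Let `R` be a finite local ring with maximal ideal `M` of order `m` such that `R ≇ F₃`
and `R/M ≇ F₂`, equivalently `|R|/m ≥ 3` and `|R^×| ≥ 3`. Then the energy of the line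
graph of `G_R` equals `2|R|(|R^×| - 2)`. -/
theorem stmt_16 (R : Type*) [CommRing R] [IsLocalRing R] [Fintype R] [DecidableEq R]
    (M : Ideal R) (hM : M.IsMaximal) (m : ℕ) (hm : m = Nat.card M)
    (hq : 3 ≤ Fintype.card R / m) (hu : 3 ≤ Nat.card Rˣ) :
    graphEnergy (unitaryCayley R).lineGraph =
      2 * (Fintype.card R : ℝ) * ((Nat.card Rˣ : ℝ) - 2) := by
  obtain rfl : M = IsLocalRing.maximalIdeal R := IsLocalRing.eq_maximalIdeal hM
  subst hm
  have hcard := IsLocalRing.card_eq_card_units_add_card_maximalIdeal R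
  have hm0 : 0 < Nat.card (IsLocalRing.maximalIdeal R) := Nat.card_pos
  have hmr : Nat.card (IsLocalRing.maximalIdeal R) + 2 ≤ Nat.card Rˣ := by
    have := (Nat.le_div_iff_mul_le hm0).1 hq
    rw [Fintype.card_eq_nat_card] at this
    omega
  have hmr' : (Nat.card (IsLocalRing.maximalIdeal R) : ℝ) + 2 ≤ Nat.card Rˣ := by
    exact_mod_cast hmr
  refine SimpleGraph.graphEnergy_lineGraph_of_isRegularOfDegree unitaryCayley_isRegularOfDegree
    (by omega) fun μ hμ => ?_
  rcases eq_zero_or_eq_neg_or_eq_of_mem_roots_unitaryCayley hμ with rfl | rfl | rfl <;> linarith
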